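/- Let m = (m_0,…,m_s) be a vector of odd integers each ≥ 3 and let |m| = ∏_{ℓ=0}^s m_ℓ. Then the Gabor–Steiner system G(m) = { π(k,κ)ψ : (k,κ) ∈ (⊕_{ℓ} ℤ_{m_ℓ}) × (⊕_{ℓ} ℤ_{m_ℓ}) }, consisting of |m|² vectors in ℂ^{|m|(|m|−1)/2}, satisfies: every vector has squared norm |m| − 1, the absolute value of the inner product of any two distinct vectors equals 1, and ∑_{(k,κ)} π(k,κ)ψ (π(k,κ)ψ)^* = 2|m| · I; i.e., G(m) is (after normalization) an equiangular tight frame. -/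

import Mathlib

open scoped ComplexInnerProductSpace

noncomputable section

/-- The index group `⊕_{ℓ=0}^s ℤ_{m_ℓ}`. -/
abbrev GSGroup {s : ℕ} (m : Fin (s + 1) → ℕ) : Type := ∀ ℓ : Fin (s + 1), ZMod (m ℓ)

/-- The rank of `i` in the lexicographic order on `⊕_{ℓ=0}^s ℤ_{m_ℓ}`
(coordinate `0` most significant). -/
def lexRank {s : ℕ} (m : Fin (s + 1) → ℕ) (i : GSGroup m) : ℕ :=
  ∑ ℓ, (i ℓ).val * ∏ ℓ' ∈ Finset.univ.filter (fun ℓ' => ℓ < ℓ'), m ℓ'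

/-- The set `𝓘` of the first `(|m|−1)/2` elements of `⊕_ℓ ℤ_{m_ℓ}` in lexicographic
order. -/
def GSIndex {s : ℕ} (m : Fin (s + 1) → ℕ) : Type :=
  {i : GSGroup m // lexRank m i < ((∏ ℓ, m ℓ) - 1) / 2}

instance {s : ℕ} (m : Fin (s + 1) → ℕ) [∀ ℓ, NeZero (m ℓ)] : Fintype (GSIndex m) :=
  Subtype.fintype _

/-- The Gabor–Steiner vector `π(k,κ)ψ ∈ ℂ^{|m|(|m|−1)/2}`: the block vector whose `i`-th
block (for `i ∈ 𝓘`) is `M^{(κ)} T^{(k)} φ_i`, where `(φ_i)_j = 1` for `j = i`, `−1` for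
`j = m − i − 𝟙`, and `0` otherwise; translation acts by `(T^{(k)} v)(j) = v(j−k)` and
modulation by multiplication with `∏_ℓ ζ_{m_ℓ}^{κ_ℓ j_ℓ}` with `ζ_q = exp(2πi/q)`. -/
def gsVec {s : ℕ} (m : Fin (s + 1) → ℕ) [∀ ℓ, NeZero (m ℓ)] (k κ : GSGroup m) :
    EuclideanSpace ℂ (GSIndex m × GSGroup m) :=
  WithLp.toLp 2 fun (p : GSIndex m × GSGroup m) =>
    (∏ ℓ, Complex.exp (2 * Real.pi * Complex.I *
        ((((κ ℓ).val * (p.2 ℓ).val : ℕ) : ℂ) / ((m ℓ : ℕ) : ℂ)))) *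
      (if p.2 - k = p.1.1 then 1
       else if p.2 - k = -p.1.1 - 1 then -1 else 0)

/-!
Write `σ t = -t - 1` on `G = ⊕ ℤ_{m_ℓ}`. Since `|m|` is odd, `2` is a unit in `G`, so `σ` has
exactly one fixed point, and `rank t + rank (σ t) = |m| - 1` for the lexicographic rank; hence `G`
is the disjoint union of `𝓘`, `σ 𝓘` and that fixed point.

The vector `π(k,κ)ψ` is the multi-window Gabor vector `(i, j) ↦ χ_κ(j) φ_i(j - k)` with the windows
`φ_i = δ_i - δ_{σ i}`, `i ∈ 𝓘`, which are pairwise orthogonal of squared norm `2`. Averaging over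
the modulations `κ` (orthogonality of characters) makes the frame operator `|m|` times the Gram
matrix of the windows, i.e. `2|m|`. For the inner products put `d = k' - k`, `δ = κ' - κ`: the
correlation `∑ₜ χ_δ(t) φ_i(t) φ_i(t - d)` equals `F i + F (σ i)` with
`F t = [d = 0] χ_δ(t) - [2t + 1 = d] χ_δ(t)`, and `F` vanishes at the fixed point of `σ`. The
partition turns the sum over `𝓘` into `∑ₜ F t = |m| [d = 0 ∧ δ = 0] - χ_δ(u)`, `u` the unique
solution of `2u + 1 = d`: this is `|m| - 1` on the diagonal and has modulus `1` off it.
-/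

theorem ZMod.val_finEquiv_symm (q : ℕ) [NeZero q] (a : ZMod q) :
    ((ZMod.finEquiv q).symm a : ℕ) = a.val := by
  obtain ⟨k, rfl⟩ := Nat.exists_eq_succ_of_ne_zero (NeZero.ne q)
  rfl

theorem ZMod.val_neg_sub_one_add_val {q : ℕ} [NeZero q] (a : ZMod q) :
    (-a - 1).val + a.val = q - 1 := by
  have hq := NeZero.one_le (n := q)
  have ha := a.val_lt
  have h : ((q - 1 - a.val : ℕ) : ZMod q) = -a - 1 := by
    rw [Nat.cast_sub (by omega), Nat.cast_sub hq, ZMod.natCast_self, ZMod.natCast_zmod_val]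
    ring
  rw [← h, ZMod.val_cast_of_lt (by omega)]
  omega

theorem EuclideanSpace.inner_eq_sum_star_mul {ι : Type*} [Fintype ι] (v w : EuclideanSpace ℂ ι) :
    ⟪v, w⟫ = ∑ i, starRingEnd ℂ (v i) * w i := by
  simp [PiLp.inner_apply, mul_comm]

namespace GaborSteiner

open Finset

variable {s : ℕ} {m : Fin (s + 1) → ℕ}

section Characters

variable [∀ ℓ, NeZero (m ℓ)]

variable (m) in
def pairing (κ j : GSGroup m) : ℂ := ∏ ℓ, ZMod.stdAddChar (κ ℓ * j ℓ)

lemma pairing_comm (κ j : GSGroup m) : pairing m κ j = pairing m j κ := by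
  simp only [pairing, mul_comm]

lemma pairing_add_right (κ j j' : GSGroup m) :
    pairing m κ (j + j') = pairing m κ j * pairing m κ j' := by
  simp only [pairing, ← prod_mul_distrib, Pi.add_apply, mul_add, AddChar.map_add_eq_mul]

lemma pairing_neg_right (κ j : GSGroup m) :
    pairing m κ (-j) = starRingEnd ℂ (pairing m κ j) := by
  simp only [pairing, map_prod, Pi.neg_apply, mul_neg, AddChar.map_neg_eq_conj]

lemma pairing_zero_left (j : GSGroup m) : pairing m 0 j = 1 := by
  simp [pairing]

lemma star_pairing_mul_pairing_left (κ κ' j : GSGroup m) :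
    starRingEnd ℂ (pairing m κ j) * pairing m κ' j = pairing m (κ' - κ) j := by
  rw [pairing_comm κ, pairing_comm κ', pairing_comm (κ' - κ), ← pairing_neg_right,
    ← pairing_add_right, neg_add_eq_sub]

lemma star_pairing_mul_pairing_right (κ j j' : GSGroup m) :
    starRingEnd ℂ (pairing m κ j) * pairing m κ j' = pairing m κ (j' - j) := by
  rw [← pairing_neg_right, ← pairing_add_right, neg_add_eq_sub]

lemma norm_pairing (κ j : GSGroup m) : ‖pairing m κ j‖ = 1 := by
  simp only [pairing, norm_prod, AddChar.norm_apply, prod_const_one]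

lemma sum_pairing (j : GSGroup m) :
    ∑ κ, pairing m κ j = if j = 0 then ((∏ ℓ, m ℓ : ℕ) : ℂ) else 0 := by
  simp only [pairing]
  rw [← Fintype.prod_sum (fun ℓ (c : ZMod (m ℓ)) => ZMod.stdAddChar (c * j ℓ))]
  simp only [AddChar.sum_mulShift _ (ZMod.isPrimitive_stdAddChar _), ZMod.card]
  split_ifs with hj
  · simp [hj]
  · obtain ⟨ℓ, hℓ⟩ := Function.ne_iff.mp hj
    exact prod_eq_zero (mem_univ ℓ) (by simp [show j ℓ ≠ 0 from hℓ])

lemma sum_pairing_right (κ : GSGroup m) :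
    ∑ j, pairing m κ j = if κ = 0 then ((∏ ℓ, m ℓ : ℕ) : ℂ) else 0 := by
  simp only [pairing_comm κ, sum_pairing]

end Characters

section Gabor

variable [∀ ℓ, NeZero (m ℓ)] {ι : Type*}

variable (m) in
def gaborVec (w : ι → GSGroup m → ℂ) (k κ : GSGroup m) :
    EuclideanSpace ℂ (ι × GSGroup m) :=
  WithLp.toLp 2 fun p => pairing m κ p.2 * w p.1 (p.2 - k)

lemma sum_star_gaborVec_mul_gaborVec (w : ι → GSGroup m → ℂ) (k : GSGroup m) (i i' : ι)
    (j j' : GSGroup m) :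
    ∑ κ, starRingEnd ℂ (gaborVec m w k κ (i', j')) * gaborVec m w k κ (i, j) =
      if j = j' then ((∏ ℓ, m ℓ : ℕ) : ℂ) * (starRingEnd ℂ (w i' (j - k)) * w i (j - k))
      else 0 := by
  have hsplit : ∀ κ, starRingEnd ℂ (gaborVec m w k κ (i', j')) * gaborVec m w k κ (i, j) =
      (starRingEnd ℂ (pairing m κ j') * pairing m κ j) *
        (starRingEnd ℂ (w i' (j' - k)) * w i (j - k)) := fun κ => by
    simp only [gaborVec, PiLp.toLp_apply, map_mul]
    ring
  simp_rw [hsplit, star_pairing_mul_pairing_right, ← sum_mul, sum_pairing, sub_eq_zero]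
  split_ifs with h
  · rw [h]
  · rw [zero_mul]

variable [Fintype ι]

lemma inner_gaborVec (w : ι → GSGroup m → ℂ) (k κ k' κ' : GSGroup m) :
    ⟪gaborVec m w k κ, gaborVec m w k' κ'⟫ = pairing m (κ' - κ) k *
      ∑ i, ∑ t, pairing m (κ' - κ) t * (starRingEnd ℂ (w i t) * w i (t - (k' - k))) := by
  rw [EuclideanSpace.inner_eq_sum_star_mul, Fintype.sum_prod_type, mul_sum]
  refine sum_congr rfl fun i _ => ?_
  rw [mul_sum, ← Equiv.sum_comp (Equiv.addRight k)]
  refine sum_congr rfl fun t _ => ?_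
  simp only [gaborVec, PiLp.toLp_apply, Equiv.coe_addRight, map_mul, add_sub_cancel_right,
    show t + k - k' = t - (k' - k) by abel]
  rw [pairing_add_right, pairing_add_right, ← star_pairing_mul_pairing_left,
    ← star_pairing_mul_pairing_left, map_mul]
  ring

lemma sum_inner_smul_gaborVec [DecidableEq ι] (w : ι → GSGroup m → ℂ) (c : ℂ)
    (hw : ∀ i i', ∑ t, starRingEnd ℂ (w i t) * w i' t = if i = i' then c else 0)
    (x : EuclideanSpace ℂ (ι × GSGroup m)) :
    ∑ k, ∑ κ, ⟪gaborVec m w k κ, x⟫ • gaborVec m w k κ = (((∏ ℓ, m ℓ : ℕ) : ℂ) * c) • x := by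
  ext ⟨i, j⟩
  have hk : ∀ i', ∑ k, starRingEnd ℂ (w i' (j - k)) * w i (j - k) = if i' = i then c else 0 :=
    fun i' => (Fintype.sum_equiv (Equiv.subLeft j) _ _ fun _ => rfl).trans (hw i' i)
  calc (∑ k, ∑ κ, ⟪gaborVec m w k κ, x⟫ • gaborVec m w k κ) (i, j)
      = ∑ k, ∑ p, x p *
          ∑ κ, starRingEnd ℂ (gaborVec m w k κ p) * gaborVec m w k κ (i, j) := by
        simp only [WithLp.ofLp_sum, WithLp.ofLp_smul, Finset.sum_apply, Pi.smul_apply,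
          smul_eq_mul, EuclideanSpace.inner_eq_sum_star_mul, sum_mul, mul_sum]
        exact sum_congr rfl fun k _ => sum_comm.trans (sum_congr rfl fun p _ =>
          sum_congr rfl fun κ _ => by ring)
    _ = ∑ i', x (i', j) * (((∏ ℓ, m ℓ : ℕ) : ℂ) *
          ∑ k, starRingEnd ℂ (w i' (j - k)) * w i (j - k)) := by
        simp only [Fintype.sum_prod_type, sum_star_gaborVec_mul_gaborVec, mul_ite, mul_zero,
          sum_ite_eq, mem_univ, if_true]
        rw [sum_comm]
        simp only [mul_sum]
    _ = (((∏ ℓ, m ℓ : ℕ) : ℂ) * c) * x (i, j) := by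
        simp only [hk, mul_ite, mul_zero, sum_ite_eq', mem_univ, if_true]
        ring

end Gabor

section LexRank

variable (m) in
lemma prod_filter_rev_lt (ℓ : Fin (s + 1)) :
    ∏ ℓ' ∈ univ.filter (fun ℓ' => ℓ.rev < ℓ'), m ℓ' =
      ∏ j : Fin ℓ, m (Fin.castLE ℓ.isLt.le j).rev := by
  refine prod_bij' (fun ℓ' h => ⟨ℓ'.rev, ?_⟩) (fun j _ => (Fin.castLE ℓ.isLt.le j).rev)
    (fun _ _ => mem_univ _) ?_ (fun _ _ => ?_) (fun _ _ => ?_) (fun _ _ => congrArg m ?_)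
  all_goals simp_all [Fin.lt_def, Fin.ext_iff]
  all_goals omega

variable [∀ ℓ, NeZero (m ℓ)]

/- `lexRank` makes coordinate `0` the most significant digit, `finPiFinEquiv` the least
significant one; hence the reversal of the coordinates. -/
variable (m) in
def lexRankEquiv : GSGroup m ≃ Fin (∏ ℓ, m ℓ) :=
  (Equiv.piCongrRight fun ℓ => (ZMod.finEquiv (m ℓ)).symm.toEquiv).trans
    ((Equiv.piCongrLeft' (fun ℓ => Fin (m ℓ)) Fin.revPerm).trans
      (finPiFinEquiv.trans (finCongr (Fintype.prod_equiv Fin.revPerm.symm _ m fun _ => rfl))))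

lemma val_lexRankEquiv (i : GSGroup m) : (lexRankEquiv m i : ℕ) = lexRank m i := by
  have h : (lexRankEquiv m i : ℕ) =
      ∑ ℓ : Fin (s + 1), (i ℓ.rev).val * ∏ j : Fin ℓ, m (Fin.castLE ℓ.isLt.le j).rev := by
    rw [lexRankEquiv, Equiv.trans_apply, Equiv.trans_apply, Equiv.trans_apply, finCongr_apply,
      Fin.val_cast, finPiFinEquiv_apply]
    exact sum_congr rfl fun ℓ _ => by rw [← ZMod.val_finEquiv_symm]; rfl
  rw [h, lexRank]
  exact Fintype.sum_equiv Fin.revPerm _ _ fun ℓ => by rw [Fin.revPerm_apply, prod_filter_rev_lt]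

lemma lexRank_injective : Function.Injective (lexRank m) := fun i i' h =>
  (lexRankEquiv m).injective (Fin.ext (by rw [val_lexRankEquiv, val_lexRankEquiv, h]))

lemma lexRank_lt (i : GSGroup m) : lexRank m i < ∏ ℓ, m ℓ :=
  val_lexRankEquiv i ▸ (lexRankEquiv m i).isLt

lemma lexRank_add_lexRank_neg_sub_one (i : GSGroup m) :
    lexRank m i + lexRank m (-i - 1) = ∏ ℓ, m ℓ - 1 := by
  have hconst : ∀ i : GSGroup m, lexRank m i + lexRank m (-i - 1) =
      ∑ ℓ, (m ℓ - 1) * ∏ ℓ' ∈ univ.filter (fun ℓ' => ℓ < ℓ'), m ℓ' := fun i => by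
    simp only [lexRank, ← sum_add_distrib, ← add_mul, Pi.sub_apply, Pi.neg_apply, Pi.one_apply,
      add_comm (i _).val, ZMod.val_neg_sub_one_add_val]
  obtain ⟨top, htop⟩ : ∃ top, lexRank m top = ∏ ℓ, m ℓ - 1 :=
    ⟨(lexRankEquiv m).symm ⟨_, Nat.sub_one_lt (lexRank_lt 0).ne_bot⟩,
      by rw [← val_lexRankEquiv, Equiv.apply_symm_apply]⟩
  -- the constant is pinned down by evaluating at `0` and at the element of rank `|m| - 1`
  have hzero : lexRank m 0 = 0 := by simp [lexRank]
  have h0 := hconst 0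
  have htop' := hconst top
  have hi := hconst i
  have hlt := lexRank_lt (-0 - 1 : GSGroup m)
  omega

end LexRank

section Involution

lemma isUnit_two (hodd : ∀ ℓ, Odd (m ℓ)) : IsUnit (2 : GSGroup m) :=
  Pi.isUnit_iff.mpr fun ℓ => by
    simpa using (ZMod.isUnit_iff_coprime 2 (m ℓ)).mpr (Nat.coprime_two_left.mpr (hodd ℓ))

lemma two_mul_add_one_injective (hodd : ∀ ℓ, Odd (m ℓ)) :
    Function.Injective fun t : GSGroup m => 2 * t + 1 := fun _ _ h =>
  (isUnit_two hodd).mul_left_cancel (add_right_cancel h)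

lemma exists_two_mul_add_one_eq (hodd : ∀ ℓ, Odd (m ℓ)) (d : GSGroup m) :
    ∃ u : GSGroup m, 2 * u + 1 = d :=
  ⟨↑(isUnit_two hodd).unit⁻¹ * (d - 1), by rw [← mul_assoc, (isUnit_two hodd).mul_val_inv]; ring⟩

variable [∀ ℓ, NeZero (m ℓ)]

lemma not_lexRank_neg_sub_one_lt {t : GSGroup m} (ht : lexRank m t < (∏ ℓ, m ℓ - 1) / 2) :
    ¬ lexRank m (-t - 1) < (∏ ℓ, m ℓ - 1) / 2 := by
  have := lexRank_add_lexRank_neg_sub_one t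
  omega

lemma lexRank_lt_or_lexRank_neg_sub_one_lt (hodd : ∀ ℓ, Odd (m ℓ)) {t : GSGroup m}
    (ht : t ≠ -t - 1) :
    lexRank m t < (∏ ℓ, m ℓ - 1) / 2 ∨ lexRank m (-t - 1) < (∏ ℓ, m ℓ - 1) / 2 := by
  obtain ⟨r, hr⟩ : Odd (∏ ℓ, m ℓ) :=
    prod_induction _ Odd (fun _ _ => Odd.mul) odd_one fun ℓ _ => hodd ℓ
  have hsum := lexRank_add_lexRank_neg_sub_one t
  have hne : lexRank m t ≠ lexRank m (-t - 1) := lexRank_injective.ne ht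
  omega

lemma GSIndex.ne_neg_sub_one (i : GSIndex m) : i.1 ≠ -i.1 - 1 := fun h =>
  not_lexRank_neg_sub_one_lt i.2 (h ▸ i.2)

lemma GSIndex.neg_sub_one_ne (i i' : GSIndex m) : -i.1 - 1 ≠ i'.1 := fun h =>
  not_lexRank_neg_sub_one_lt i.2 (h ▸ i'.2)

lemma sum_gsIndex {M : Type*} [AddCommMonoid M] (f : GSGroup m → M) :
    ∑ i : GSIndex m, f i.1 = ∑ t, if lexRank m t < (∏ ℓ, m ℓ - 1) / 2 then f t else 0 := by
  rw [← sum_filter]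
  exact (sum_subtype _ (by simp) f).symm

lemma sum_eq_sum_gsIndex_add {M : Type*} [AddCommMonoid M] (hodd : ∀ ℓ, Odd (m ℓ))
    (g : GSGroup m → M) {c : GSGroup m} (hc : 2 * c + 1 = 0) :
    ∑ t, g t = ∑ i : GSIndex m, (g i.1 + g (-i.1 - 1)) + g c := by
  have hfixed : ∀ t, t = c ↔ -t - 1 = t := fun t => by
    rw [← (two_mul_add_one_injective hodd).eq_iff, hc]
    constructor <;> intro h <;> linear_combination -h
  have hsplit : ∀ t, g t = ((if lexRank m t < (∏ ℓ, m ℓ - 1) / 2 then g t else 0) +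
      (if lexRank m (-t - 1) < (∏ ℓ, m ℓ - 1) / 2 then g t else 0)) +
        if t = c then g t else 0 := by
    intro t
    by_cases h1 : lexRank m t < (∏ ℓ, m ℓ - 1) / 2
    · have h2 := not_lexRank_neg_sub_one_lt h1
      have h3 : t ≠ c := fun h => h2 (((hfixed t).mp h).symm ▸ h1)
      simp [h1, h2, h3]
    by_cases h2 : lexRank m (-t - 1) < (∏ ℓ, m ℓ - 1) / 2
    · have h3 : t ≠ c := fun h => h1 (((hfixed t).mp h) ▸ h2)
      simp [h1, h2, h3]
    · have h3 : t = c := (hfixed t).mpr (by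
        by_contra h
        exact (lexRank_lt_or_lexRank_neg_sub_one_lt hodd (Ne.symm h)).elim h1 h2)
      subst h3
      simp [h1, h2]
  have hreflect : ∑ t, (if lexRank m (-t - 1) < (∏ ℓ, m ℓ - 1) / 2 then g t else 0) =
      ∑ t, if lexRank m t < (∏ ℓ, m ℓ - 1) / 2 then g (-t - 1) else 0 :=
    Fintype.sum_equiv ((Equiv.neg _).trans (Equiv.subRight 1)) _ _ fun t => by
      simp only [Equiv.trans_apply, Equiv.neg_apply, Equiv.subRight_apply, neg_sub,
        sub_neg_eq_add, add_sub_cancel_left]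
  rw [sum_congr rfl fun t _ => hsplit t, sum_add_distrib, sum_add_distrib, hreflect,
    sum_ite_eq', if_pos (mem_univ c), ← sum_gsIndex g, ← sum_gsIndex (fun t => g (-t - 1)),
    sum_add_distrib]

end Involution

section Windows

def window (a t : GSGroup m) : ℂ := if t = a then 1 else if t = -a - 1 then -1 else 0

lemma star_window (a t : GSGroup m) : starRingEnd ℂ (window a t) = window a t := by
  unfold window
  split_ifs <;> simp

variable [∀ ℓ, NeZero (m ℓ)]

lemma sum_mul_window (f : GSGroup m → ℂ) {a : GSGroup m} (ha : a ≠ -a - 1) :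
    ∑ t, f t * window a t = f a - f (-a - 1) := by
  rw [Fintype.sum_eq_add a (-a - 1) ha fun t ht => by simp [window, ht.1, ht.2]]
  simp only [window, if_true, if_neg ha.symm]
  ring

instance : DecidableEq (GSIndex m) := inferInstanceAs (DecidableEq (Subtype _))

lemma sum_star_window_mul_window (i i' : GSIndex m) :
    ∑ t, starRingEnd ℂ (window i.1 t) * window i'.1 t = if i = i' then 2 else 0 := by
  simp only [star_window]
  rw [sum_mul_window _ (GSIndex.ne_neg_sub_one i')]
  have h1 := GSIndex.neg_sub_one_ne i' i
  by_cases h : i = i'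
  · subst h
    norm_num [window, h1]
  · have h2 : i'.1 ≠ i.1 := fun h' => h (Subtype.ext h'.symm)
    have h3 : -i'.1 - 1 ≠ -i.1 - 1 := fun h' => h2 (by linear_combination -h')
    simp [window, h, h1, h2, h3, (GSIndex.neg_sub_one_ne i i').symm]

lemma sum_sum_pairing_mul_window_mul_window (hodd : ∀ ℓ, Odd (m ℓ)) (δ : GSGroup m)
    {d u : GSGroup m} (hu : 2 * u + 1 = d) :
    ∑ i : GSIndex m, ∑ t, pairing m δ t * (starRingEnd ℂ (window i.1 t) * window i.1 (t - d)) =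
      (if d = 0 ∧ δ = 0 then ((∏ ℓ, m ℓ : ℕ) : ℂ) else 0) - pairing m δ u := by
  set F : GSGroup m → ℂ := fun t =>
    (if d = 0 then pairing m δ t else 0) - if 2 * t + 1 = d then pairing m δ t else 0
  have hblock : ∀ i : GSIndex m, ∑ t, pairing m δ t *
      (starRingEnd ℂ (window i.1 t) * window i.1 (t - d)) = F i.1 + F (-i.1 - 1) := by
    intro i
    have hne := GSIndex.ne_neg_sub_one i
    have hcomm : ∀ t, pairing m δ t * (starRingEnd ℂ (window i.1 t) * window i.1 (t - d)) =
        pairing m δ t * window i.1 (t - d) * window i.1 t := fun t => by rw [star_window]; ring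
    rw [sum_congr rfl fun t _ => hcomm t, sum_mul_window _ hne]
    have e1 : i.1 - d = -i.1 - 1 ↔ 2 * i.1 + 1 = d := by
      constructor <;> intro h <;> linear_combination h
    have e2 : -i.1 - 1 - d = i.1 ↔ 2 * (-i.1 - 1) + 1 = d := by
      constructor <;> intro h <;> linear_combination h
    simp only [F, window, sub_eq_self, e1, e2]
    split_ifs <;> simp_all [sub_eq_add_neg]
  obtain ⟨c, hc⟩ := exists_two_mul_add_one_eq hodd 0
  have hFc : F c = 0 := by
    simp only [F, hc, eq_comm (a := (0 : GSGroup m)), sub_self]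
  have hsumF : ∑ t, F t =
      (if d = 0 ∧ δ = 0 then ((∏ ℓ, m ℓ : ℕ) : ℂ) else 0) - pairing m δ u := by
    have hsol : ∀ t, 2 * t + 1 = d ↔ t = u := fun t => by
      rw [← hu, (two_mul_add_one_injective hodd).eq_iff]
    simp only [F, hsol, sum_sub_distrib, sum_ite_eq', mem_univ, if_true]
    by_cases hd : d = 0 <;> simp [hd, sum_pairing_right]
  calc _ = ∑ i : GSIndex m, (F i.1 + F (-i.1 - 1)) := sum_congr rfl fun i _ => hblock i
    _ = ∑ t, F t - F c := by rw [sum_eq_sum_gsIndex_add hodd F hc, add_sub_cancel_right]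
    _ = _ := by rw [hFc, sub_zero, hsumF]

end Windows

variable [∀ ℓ, NeZero (m ℓ)]

lemma gsVec_eq_gaborVec (k κ : GSGroup m) :
    gsVec m k κ = gaborVec m (fun i : GSIndex m => window i.1) k κ := by
  ext p
  simp only [gsVec, gaborVec, PiLp.toLp_apply, window, pairing]
  congr 1
  refine prod_congr rfl fun ℓ _ => ?_
  have h : κ ℓ * p.2 ℓ = (((κ ℓ).val * (p.2 ℓ).val : ℕ) : ZMod (m ℓ)) := by
    push_cast [ZMod.natCast_zmod_val]
    rfl
  rw [h, ZMod.stdAddChar_apply, ZMod.toCircle_natCast, mul_div_assoc]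

lemma inner_gsVec (hodd : ∀ ℓ, Odd (m ℓ)) (k κ k' κ' : GSGroup m) :
    ∃ u, ⟪gsVec m k κ, gsVec m k' κ'⟫ = pairing m (κ' - κ) k *
      ((if k' - k = 0 ∧ κ' - κ = 0 then ((∏ ℓ, m ℓ : ℕ) : ℂ) else 0) - pairing m (κ' - κ) u) := by
  obtain ⟨u, hu⟩ := exists_two_mul_add_one_eq hodd (k' - k)
  refine ⟨u, ?_⟩
  rw [gsVec_eq_gaborVec, gsVec_eq_gaborVec, inner_gaborVec,
    sum_sum_pairing_mul_window_mul_window hodd _ hu]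

end GaborSteiner

open GaborSteiner in
theorem gabor_steiner_etf {s : ℕ} (m : Fin (s + 1) → ℕ) [∀ ℓ, NeZero (m ℓ)]
    (hodd : ∀ ℓ, Odd (m ℓ)) :
    (∀ k κ : GSGroup m, ‖gsVec m k κ‖ ^ 2 = ((∏ ℓ, m ℓ : ℕ) : ℝ) - 1) ∧
    (∀ k κ k' κ' : GSGroup m, (k, κ) ≠ (k', κ') →
      ‖⟪gsVec m k κ, gsVec m k' κ'⟫‖ = 1) ∧
    (∀ x : EuclideanSpace ℂ (GSIndex m × GSGroup m),
      ∑ k : GSGroup m, ∑ κ : GSGroup m, ⟪gsVec m k κ, x⟫ • gsVec m k κ =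
        ((2 * (∏ ℓ, m ℓ : ℕ) : ℕ) : ℂ) • x) := by
  refine ⟨fun k κ => ?_, fun k κ k' κ' hne => ?_, fun x => ?_⟩
  · obtain ⟨u, hu⟩ := inner_gsVec hodd k κ k κ
    rw [inner_self_eq_norm_sq_to_K] at hu
    simp only [sub_self, and_self, if_true, pairing_zero_left, one_mul] at hu
    apply Complex.ofReal_injective
    simpa using hu
  · obtain ⟨u, hu⟩ := inner_gsVec hodd k κ k' κ'
    have hoff : ¬(k' - k = 0 ∧ κ' - κ = 0) := fun h =>
      hne (by rw [sub_eq_zero, sub_eq_zero] at h; rw [h.1, h.2])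
    rw [hu, if_neg hoff, zero_sub, norm_mul, norm_neg, norm_pairing, norm_pairing, one_mul]
  · simp only [gsVec_eq_gaborVec]
    rw [sum_inner_smul_gaborVec _ 2 sum_star_window_mul_window]
    push_cast
    ring_nf
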